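/- arXiv:1607.03788 — 2 statements merged into one kernel-verified Lean document; each statement's English description precedes it below -/
import Mathlib

section
/- Let (Z_i)_{i≥0} be i.i.d. unit Fréchet random variables and let (a_n) be positive reals with n·P(Z_1 > a_n) → 1 as n → ∞. There exists ε > 0 with 1 − e^{−1/ε} > 4/ε², and for any such ε, liminf_{n→∞} P( max_{1≤i≤n−1} Z_i > ε a_n, and there do NOT exist i, j ∈ {0, 1, …, n} with i ≠ j, Z_i > ε a_n and Z_j > ε a_n/4 ) ≥ (1 − e^{−1/ε}) − 4/ε² > 0. -/
/-!
The unit Fréchet tail is `P(Z > x) = 1 - e^{-1/x} ~ 1/x` as `x → ∞`, so the normalisation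
`n P(Z > a_n) → 1` forces `a_n → ∞` and `n / a_n → 1`. By independence
`P(A_n) = 1 - e^{-(n-1)/(ε a_n)} → 1 - e^{-1/ε}`, while a union bound over ordered pairs gives
`P(B_n) ≤ (n+1)² P(Z > ε a_n) P(Z > ε a_n / 4) → 4/ε²`. Since `P(A_n \ B_n) ≥ P(A_n) - P(B_n)`,
the liminf is at least the difference of the two limits; `ε = 10` makes it positive.
-/

open MeasureTheory ProbabilityTheory Filter Real Topology Finset

lemma tendsto_mul_one_sub_exp_neg_one_div_atTop :
    Tendsto (fun t : ℝ => t * (1 - exp (-1 / t))) atTop (𝓝 1) := by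
  have hderiv : HasDerivAt (fun s => 1 - exp (-s)) 1 0 := by
    simpa using ((hasDerivAt_id (0 : ℝ)).neg.exp).const_sub 1
  refine (hderiv.tendsto_slope_zero.comp
    (tendsto_inv_atTop_nhdsGT_zero.mono_right (nhdsGT_le_nhdsNE 0))).congr fun t => ?_
  simp [neg_div, inv_inv]

lemma Filter.Tendsto.mul_one_sub_exp_neg_one_div {α : Type*} {l : Filter α} {x : α → ℝ}
    (hx : Tendsto x l atTop) : Tendsto (fun n => x n * (1 - Real.exp (-1 / x n))) l (𝓝 1) :=
  tendsto_mul_one_sub_exp_neg_one_div_atTop.comp hx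

section
variable {a : ℕ → ℝ} (ha : ∀ n, 0 < a n)
  (h : Tendsto (fun n : ℕ => n * (1 - exp (-1 / a n))) atTop (𝓝 1))
include ha h

lemma tendsto_atTop_of_tendsto_natCast_mul_one_sub_exp : Tendsto a atTop atTop := by
  have htail : Tendsto (fun n : ℕ => 1 - exp (-1 / a n)) atTop (𝓝 0) := by
    refine (zero_mul (1 : ℝ) ▸ tendsto_one_div_atTop_nhds_zero_nat.mul h).congr' ?_
    filter_upwards [eventually_ne_atTop 0] with n hn
    field_simp
  have hinv : Tendsto (fun n => (a n)⁻¹) atTop (𝓝 0) := by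
    -- `1 / a n = -log (1 - (1 - exp (-1 / a n)))`
    have := ((continuousAt_log (by norm_num : (1 : ℝ) - 0 ≠ 0)).tendsto.comp
      (tendsto_const_nhds.sub htail)).neg
    simpa [neg_div] using this
  have : Tendsto (fun n => (a n)⁻¹) atTop (𝓝[>] 0) :=
    tendsto_nhdsWithin_iff.mpr ⟨hinv, Eventually.of_forall fun n => inv_pos.mpr (ha n)⟩
  simpa only [Pi.inv_def, inv_inv] using this.inv_tendsto_nhdsGT_zero

lemma tendsto_natCast_div_of_tendsto_natCast_mul_one_sub_exp :
    Tendsto (fun n : ℕ => n / a n) atTop (𝓝 1) := by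
  have := h.div (tendsto_atTop_of_tendsto_natCast_mul_one_sub_exp ha h).mul_one_sub_exp_neg_one_div
    one_ne_zero
  rw [div_one] at this
  refine this.congr fun n => ?_
  have htail_pos : 0 < 1 - exp (-1 / a n) :=
    sub_pos.mpr (exp_lt_one_iff.mpr (div_neg_of_neg_of_pos (by norm_num) (ha n)))
  exact mul_div_mul_right _ _ htail_pos.ne'
end

section
variable {Ω ι : Type*} [MeasurableSpace Ω] {μ : Measure Ω} {X : ι → Ω → ℝ}

lemma probReal_lt_eq_one_sub_probReal_le [IsProbabilityMeasure μ] {Y : Ω → ℝ}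
    (hY : Measurable Y) (x : ℝ) : μ.real {ω | x < Y ω} = 1 - μ.real {ω | Y ω ≤ x} := by
  rw [← probReal_compl_eq_one_sub (show MeasurableSet {ω | Y ω ≤ x} from hY measurableSet_Iic),
    Set.compl_ofPred]
  simp_rw [not_le]

lemma ProbabilityTheory.iIndepFun.measureReal_exists_lt [IsProbabilityMeasure μ]
    (hX : iIndepFun X μ) (hXm : ∀ i, Measurable (X i)) (S : Finset ι) (t : ℝ) :
    μ.real {ω | ∃ i ∈ S, t < X i ω} = 1 - ∏ i ∈ S, μ.real {ω | X i ω ≤ t} := by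
  have hset : {ω | ∃ i ∈ S, t < X i ω} = (⋂ i ∈ S, X i ⁻¹' Set.Iic t)ᶜ := by
    ext ω; simp
  rw [hset,
    probReal_compl_eq_one_sub (S.measurableSet_biInter fun i _ => hXm i measurableSet_Iic),
    measureReal_def, hX.measure_inter_preimage_eq_mul S fun _ _ => measurableSet_Iic,
    ENNReal.toReal_prod]
  rfl

lemma ProbabilityTheory.iIndepFun.measureReal_exists_pair_lt_le (hX : iIndepFun X μ)
    (S : Finset ι) {s t p q : ℝ} (hp : ∀ i ∈ S, μ.real {ω | s < X i ω} ≤ p)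
    (hq : ∀ j ∈ S, μ.real {ω | t < X j ω} ≤ q) :
    μ.real {ω | ∃ i ∈ S, ∃ j ∈ S, i ≠ j ∧ s < X i ω ∧ t < X j ω} ≤ (#S : ℝ) ^ 2 * (p * q) := by
  have hpair : ∀ i ∈ S, ∀ j ∈ S, μ.real {ω | i ≠ j ∧ s < X i ω ∧ t < X j ω} ≤ p * q := by
    intro i hi j hj
    have hp0 : 0 ≤ p := measureReal_nonneg.trans (hp i hi)
    by_cases hij : i = j
    · simpa [hij] using mul_nonneg hp0 (measureReal_nonneg.trans (hq j hj))
    have hset : {ω | i ≠ j ∧ s < X i ω ∧ t < X j ω} =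
        X i ⁻¹' Set.Ioi s ∩ X j ⁻¹' Set.Ioi t := by
      ext ω; simp [hij]
    rw [hset, measureReal_def, (hX.indepFun hij).measure_inter_preimage_eq_mul _ _
      measurableSet_Ioi measurableSet_Ioi, ENNReal.toReal_mul]
    exact mul_le_mul (hp i hi) (hq j hj) measureReal_nonneg hp0
  have hset : {ω | ∃ i ∈ S, ∃ j ∈ S, i ≠ j ∧ s < X i ω ∧ t < X j ω} =
      ⋃ i ∈ S, ⋃ j ∈ S, {ω | i ≠ j ∧ s < X i ω ∧ t < X j ω} := by
    ext ω; simp only [Set.mem_ofPred_eq, Set.mem_iUnion, exists_prop]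
  calc μ.real {ω | ∃ i ∈ S, ∃ j ∈ S, i ≠ j ∧ s < X i ω ∧ t < X j ω}
      ≤ ∑ i ∈ S, ∑ j ∈ S, μ.real {ω | i ≠ j ∧ s < X i ω ∧ t < X j ω} := by
        rw [hset]
        exact (measureReal_biUnion_finset_le _ _).trans
          (sum_le_sum fun i _ => measureReal_biUnion_finset_le _ _)
    _ ≤ ∑ i ∈ S, ∑ j ∈ S, p * q :=
        sum_le_sum fun i hi => sum_le_sum fun j hj => hpair i hi j hj
    _ = (#S : ℝ) ^ 2 * (p * q) := by simp [sq, mul_assoc]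
end

lemma le_liminf_of_tendsto_of_le {α : Type*} {l : Filter α} [l.NeBot] {u v : α → ℝ} {L : ℝ}
    (hu : Tendsto u l (𝓝 L)) (huv : u ≤ᶠ[l] v) (hv : IsBoundedUnder (· ≤ ·) l v) :
    L ≤ liminf v l :=
  hu.liminf_eq ▸ liminf_le_liminf huv hu.isBoundedUnder_ge hv.isCoboundedUnder_ge

lemma four_div_sq_lt_one_sub_exp_neg_one_div_ten : 4 / (10 : ℝ) ^ 2 < 1 - exp (-1 / 10) := by
  have : exp (-1 / 10) ≤ 10 / 11 := by
    rw [neg_div, exp_neg, inv_le_comm₀ (exp_pos _) (by norm_num)]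
    linarith [add_one_le_exp (1 / 10 : ℝ)]
  linarith

section
variable {a : ℕ → ℝ} (ha : Tendsto a atTop atTop)
  (hna : Tendsto (fun n : ℕ => n / a n) atTop (𝓝 1))
include ha hna

lemma tendsto_one_sub_exp_neg_pow_natSub_one (ε : ℝ) :
    Tendsto (fun n : ℕ => 1 - exp (-1 / (ε * a n)) ^ (n - 1)) atTop (𝓝 (1 - exp (-1 / ε))) := by
  have hsub : Tendsto (fun n : ℕ => ((n - 1 : ℕ) : ℝ) / a n) atTop (𝓝 1) := by
    refine (sub_zero (1 : ℝ) ▸ hna.sub ha.inv_tendsto_atTop).congr' ?_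
    filter_upwards [eventually_ge_atTop 1] with n hn
    rw [Nat.cast_sub hn, Pi.inv_apply, sub_div, Nat.cast_one, one_div]
  have hexp := (continuous_exp.tendsto _).comp (mul_one (-1 / ε) ▸ hsub.const_mul (-1 / ε))
  refine tendsto_const_nhds.sub (hexp.congr fun n => ?_)
  rw [Function.comp_apply, ← exp_nat_mul]
  ring_nf

lemma tendsto_sq_mul_one_sub_exp_neg_mul_one_sub_exp_neg {ε : ℝ} (hε : 0 < ε) :
    Tendsto (fun n : ℕ => ((n : ℝ) + 1) ^ 2 *
      ((1 - exp (-1 / (ε * a n))) * (1 - exp (-1 / (ε * a n / 4))))) atTop (𝓝 (4 / ε ^ 2)) := by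
  have hadd : Tendsto (fun n : ℕ => ((n : ℝ) + 1) / a n) atTop (𝓝 1) := by
    refine (add_zero (1 : ℝ) ▸ hna.add ha.inv_tendsto_atTop).congr fun n => ?_
    rw [Pi.inv_apply, add_div, one_div]
  have hεa := ha.const_mul_atTop hε
  have hp := hεa.mul_one_sub_exp_neg_one_div
  have hq := (hεa.atTop_div_const (by norm_num : (0 : ℝ) < 4)).mul_one_sub_exp_neg_one_div
  have := ((hadd.pow 2).mul (hp.mul hq)).const_mul (4 / ε ^ 2)
  simp only [one_pow, mul_one] at this
  refine this.congr' ?_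
  filter_upwards [ha.eventually_gt_atTop 0] with n hn
  field_simp
end

/-- Let `(Z_i)_{i≥0}` be i.i.d. unit Fréchet random variables
(`P(Z ≤ x) = exp(−1/x)` for `x > 0` and `= 0` for `x ≤ 0`) and let `(a_n)` be positive
reals with `n·P(Z_1 > a_n) → 1`. There exists `ε > 0` with `1 − e^{−1/ε} > 4/ε²`, and for
any such `ε`,
`liminf_{n→∞} P( max_{1≤i≤n−1} Z_i > ε a_n and there are no i ≠ j in {0,…,n} with
Z_i > ε a_n and Z_j > ε a_n/4 ) ≥ (1 − e^{−1/ε}) − 4/ε² > 0`. -/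
theorem liminf_prob_A_minus_B_pos {Ω : Type*} [MeasureSpace Ω]
    [IsProbabilityMeasure (ℙ : Measure Ω)]
    (Z : ℕ → Ω → ℝ) (hmeas : ∀ i, Measurable (Z i))
    (hindep : iIndepFun Z ℙ)
    (hcdf : ∀ i : ℕ, ∀ x : ℝ,
      ℙ {ω | Z i ω ≤ x} = if 0 < x then ENNReal.ofReal (Real.exp (-1 / x)) else 0)
    (a : ℕ → ℝ) (ha : ∀ n, 0 < a n)
    (hna : Tendsto (fun n : ℕ => (n : ℝ) * (ℙ {ω | a n < Z 1 ω}).toReal) atTop (nhds 1)) :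
    (∃ ε : ℝ, 0 < ε ∧ 4 / ε ^ 2 < 1 - Real.exp (-1 / ε)) ∧
      ∀ ε : ℝ, 0 < ε → 4 / ε ^ 2 < 1 - Real.exp (-1 / ε) →
        (1 - Real.exp (-1 / ε)) - 4 / ε ^ 2 ≤
            Filter.liminf (fun n : ℕ =>
              (ℙ {ω | (∃ i ∈ Finset.Icc 1 (n - 1), ε * a n < Z i ω) ∧
                ¬ ∃ i ∈ Finset.range (n + 1), ∃ j ∈ Finset.range (n + 1),
                  i ≠ j ∧ ε * a n < Z i ω ∧ ε * a n / 4 < Z j ω}).toReal) atTop ∧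
          0 < (1 - Real.exp (-1 / ε)) - 4 / ε ^ 2 := by
  have hcdf_real : ∀ i {x}, 0 < x → (ℙ : Measure Ω).real {ω | Z i ω ≤ x} = exp (-1 / x) :=
    fun i x hx => by rw [measureReal_def, hcdf, if_pos hx, ENNReal.toReal_ofReal (exp_nonneg _)]
  have htail : ∀ i {x}, 0 < x → (ℙ : Measure Ω).real {ω | x < Z i ω} = 1 - exp (-1 / x) :=
    fun i x hx => by rw [probReal_lt_eq_one_sub_probReal_le (hmeas i), hcdf_real i hx]
  have hna' : Tendsto (fun n : ℕ => n * (1 - exp (-1 / a n))) atTop (𝓝 1) :=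
    hna.congr fun n => by rw [← measureReal_def, htail 1 (ha n)]
  have ha_top := tendsto_atTop_of_tendsto_natCast_mul_one_sub_exp ha hna'
  have hdiv := tendsto_natCast_div_of_tendsto_natCast_mul_one_sub_exp ha hna'
  refine ⟨⟨10, by norm_num, four_div_sq_lt_one_sub_exp_neg_one_div_ten⟩,
    fun ε hε _ => ⟨?_, by linarith⟩⟩
  have hA : ∀ n, (ℙ : Measure Ω).real {ω | ∃ i ∈ Icc 1 (n - 1), ε * a n < Z i ω} =
      1 - exp (-1 / (ε * a n)) ^ (n - 1) := fun n => by
    rw [hindep.measureReal_exists_lt hmeas,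
      prod_congr rfl fun i _ => hcdf_real i (mul_pos hε (ha n)), prod_const, Nat.card_Icc,
      Nat.add_sub_cancel]
  have hB : ∀ n, (ℙ : Measure Ω).real {ω | ∃ i ∈ range (n + 1), ∃ j ∈ range (n + 1),
      i ≠ j ∧ ε * a n < Z i ω ∧ ε * a n / 4 < Z j ω} ≤
      ((n : ℝ) + 1) ^ 2 * ((1 - exp (-1 / (ε * a n))) * (1 - exp (-1 / (ε * a n / 4)))) :=
    fun n => by
      have hεa := mul_pos hε (ha n)
      simpa using hindep.measureReal_exists_pair_lt_le (range (n + 1))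
        (fun i _ => (htail i hεa).le) (fun j _ => (htail j (by positivity)).le)
  refine le_liminf_of_tendsto_of_le ((tendsto_one_sub_exp_neg_pow_natSub_one ha_top hdiv ε).sub
    (tendsto_sq_mul_one_sub_exp_neg_mul_one_sub_exp_neg ha_top hdiv hε))
    (Eventually.of_forall fun n => ?_) (isBoundedUnder_of ⟨1, fun n => measureReal_le_one⟩)
  dsimp only
  rw [← hA n]
  exact (sub_le_sub_left (hB n) _).trans le_measureReal_sdiff
end

section
/- Let (Z_i)_{i≥0} be i.i.d. unit Fréchet random variables and let (a_n) be positive reals with n·P(Z_1 > a_n) → 1 as n → ∞. For n ≥ 1 define V_n : [0,1] → ℝ by V_n(t) = ⋁_{j=1}^{⌊nt⌋} Z_j/a_n − ⋁_{j=1}^{⌊nt⌋} Z_{j−1}/a_n (with the maximum over an empty index set equal to 0). Then there exist ε > 0 and c > 0 such that for every δ > 0, limsup_{n→∞} P( ω_δ(V_n) > ε ) ≥ c; in particular lim_{δ↓0} limsup_{n→∞} P( ω_δ(V_n) > ε ) > 0. -/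
open MeasureTheory ProbabilityTheory Filter

/-- For real numbers `x₁, x₂, x₃`, `M(x₁,x₂,x₃) = 0` if `x₂` lies in the closed interval
with endpoints `x₁` and `x₃`, and `M(x₁,x₂,x₃) = min(|x₂−x₁|, |x₃−x₂|)` otherwise. -/
noncomputable def M1Dist (x₁ x₂ x₃ : ℝ) : ℝ :=
  haveI := Classical.propDecidable (x₂ ∈ Set.uIcc x₁ x₃)
  if x₂ ∈ Set.uIcc x₁ x₃ then 0 else min |x₂ - x₁| |x₃ - x₂|

/-- The `M₁` oscillation `ω_δ(x) = sup{ M(x(t₁), x(t), x(t₂)) :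
0 ≤ t₁ ≤ t ≤ t₂ ≤ 1, t₂ − t₁ ≤ δ }` of a function `x` on `[0,1]`. -/
noncomputable def M1Osc (x : ℝ → ℝ) (δ : ℝ) : ℝ :=
  sSup {v : ℝ | ∃ t₁ t t₂ : ℝ, 0 ≤ t₁ ∧ t₁ ≤ t ∧ t ≤ t₂ ∧ t₂ ≤ 1 ∧ t₂ - t₁ ≤ δ ∧
    v = M1Dist (x t₁) (x t) (x t₂)}

open Topology Real

/-!
Let `T_j` (`1 ≤ j ≤ n - 1`) be the event that `Z_j > 5 a_n` while every other `Z_i`, `i ≤ n`, is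
at most `2 a_n`. On `T_j` the path `V_n` is at most `2` at `(j-1)/n`, exceeds `3` at `j/n`, and is
`0` at `(j+1)/n`, because from then on both running maxima equal `Z_j / a_n`; so `ω_δ(V_n) > 1`
once `2/n ≤ δ`. The hypothesis on `a_n` means `n / a_n → 1`, and the `T_j` are disjoint, so
`P(⋃ T_j) = (n-1) P(Z > 5 a_n) P(Z ≤ 2 a_n)^n → e^{-1/2} / 5`.
-/

lemma M1Dist_le_abs_sub (x₁ x₂ x₃ : ℝ) : M1Dist x₁ x₂ x₃ ≤ |x₂ - x₁| := by
  unfold M1Dist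
  split
  · positivity
  · exact min_le_left _ _

lemma lt_M1Dist {x₁ x₂ x₃ c : ℝ} (hc : 0 ≤ c) (h₁ : c < x₂ - x₁) (h₃ : c < x₂ - x₃) :
    c < M1Dist x₁ x₂ x₃ := by
  have hnot : x₂ ∉ Set.uIcc x₁ x₃ := fun hx => by
    rcases Set.mem_uIcc.1 hx with h | h <;> linarith [h.1, h.2]
  rw [M1Dist, if_neg hnot, lt_min_iff, abs_of_pos (by linarith), abs_of_neg (by linarith)]
  constructor <;> linarith

lemma M1Dist_le_M1Osc {x : ℝ → ℝ} {B : ℝ} (hB : ∀ s ∈ Set.Icc (0 : ℝ) 1, |x s| ≤ B)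
    {δ t₁ t t₂ : ℝ} (h₁ : 0 ≤ t₁) (h₁t : t₁ ≤ t) (ht₂ : t ≤ t₂) (h₂ : t₂ ≤ 1)
    (hδ : t₂ - t₁ ≤ δ) : M1Dist (x t₁) (x t) (x t₂) ≤ M1Osc x δ := by
  refine le_csSup ⟨2 * B, ?_⟩ ⟨t₁, t, t₂, h₁, h₁t, ht₂, h₂, hδ, rfl⟩
  rintro v ⟨s₁, s, s₂, h₁, h₁s, hs₂, h₂, -, rfl⟩
  have hs₁B := hB s₁ ⟨h₁, by linarith⟩
  have hsB := hB s ⟨by linarith, by linarith⟩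
  calc M1Dist (x s₁) (x s) (x s₂) ≤ |x s - x s₁| := M1Dist_le_abs_sub _ _ _
    _ ≤ |x s| + |x s₁| := abs_sub _ _
    _ ≤ 2 * B := by linarith

lemma abs_comp_floor_le_sum (G : ℕ → ℝ) (n : ℕ) :
    ∀ s ∈ Set.Icc (0 : ℝ) 1, |G ⌊(n : ℝ) * s⌋₊| ≤ ∑ k ∈ Finset.range (n + 1), |G k| := by
  rintro s ⟨hs₀, hs₁⟩
  have hfloor : ⌊(n : ℝ) * s⌋₊ ≤ n :=
    Nat.floor_le_of_le (mul_le_of_le_one_right n.cast_nonneg hs₁)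
  exact Finset.single_le_sum (f := fun k => |G k|) (fun _ _ => abs_nonneg _)
    (Finset.mem_range.2 (Nat.lt_succ_of_le hfloor))

lemma M1Dist_le_M1Osc_comp_floor (G : ℕ → ℝ) {k n : ℕ} (hkn : k + 2 ≤ n) {δ : ℝ}
    (hδ : 2 / n ≤ δ) :
    M1Dist (G k) (G (k + 1)) (G (k + 2)) ≤ M1Osc (fun t => G ⌊(n : ℝ) * t⌋₊) δ := by
  have hn : (0 : ℝ) < n := by exact_mod_cast (show 0 < n by omega)
  have hfloor : ∀ m : ℕ, ⌊(n : ℝ) * (m / n)⌋₊ = m := fun m => by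
    rw [mul_div_cancel₀ _ hn.ne', Nat.floor_natCast]
  have key := M1Dist_le_M1Osc (abs_comp_floor_le_sum G n) (δ := δ) (t₁ := k / n)
    (t := ((k + 1 : ℕ) : ℝ) / n) (t₂ := ((k + 2 : ℕ) : ℝ) / n) (by positivity)
    (by gcongr; exact_mod_cast k.le_succ) (by gcongr; omega)
    ((div_le_one hn).2 (by exact_mod_cast hkn))
    (by rw [← sub_div]; convert hδ using 2; push_cast; ring)
  simpa only [hfloor] using key

def runMax (f : ℕ → ℝ) (k : ℕ) : ℝ := (Finset.Icc 1 k).fold max 0 f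

lemma runMax_nonneg (f : ℕ → ℝ) (k : ℕ) : 0 ≤ runMax f k :=
  (Finset.le_fold_max _).2 (Or.inl le_rfl)

lemma le_runMax {f : ℕ → ℝ} {i k : ℕ} (h₁ : 1 ≤ i) (hk : i ≤ k) : f i ≤ runMax f k :=
  (Finset.le_fold_max _).2 (Or.inr ⟨i, Finset.mem_Icc.2 ⟨h₁, hk⟩, le_rfl⟩)

lemma runMax_le {f : ℕ → ℝ} {k : ℕ} {c : ℝ} (hc : 0 ≤ c)
    (h : ∀ i, 1 ≤ i → i ≤ k → f i ≤ c) : runMax f k ≤ c :=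
  (Finset.fold_max_le _).2 ⟨hc, fun i hi => h i (Finset.mem_Icc.1 hi).1 (Finset.mem_Icc.1 hi).2⟩

lemma runMax_eq_of_le {f : ℕ → ℝ} {i₀ k : ℕ} (h₁ : 1 ≤ i₀) (hk : i₀ ≤ k) (h₀ : 0 ≤ f i₀)
    (h : ∀ i, 1 ≤ i → i ≤ k → f i ≤ f i₀) : runMax f k = f i₀ :=
  le_antisymm (runMax_le h₀ h) (le_runMax h₁ hk)

/-- `V_n(t) = maxDiff (fun j => Z j / a n) ⌊n t⌋₊`. -/
def maxDiff (y : ℕ → ℝ) (k : ℕ) : ℝ := runMax y k - runMax (fun i => y (i - 1)) k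

lemma one_lt_M1Dist_maxDiff {y : ℕ → ℝ} {k : ℕ} (hpeak : 5 < y (k + 1))
    (hrest : ∀ i ≤ k + 2, i ≠ k + 1 → y i ≤ 2) :
    1 < M1Dist (maxDiff y k) (maxDiff y (k + 1)) (maxDiff y (k + 2)) := by
  have hbefore : maxDiff y k ≤ 2 := by
    have := runMax_le (f := y) (k := k) zero_le_two fun i _ hi => hrest i (by omega) (by omega)
    linarith [runMax_nonneg (fun i => y (i - 1)) k, show maxDiff y k = _ - _ from rfl]
  have hat : 3 < maxDiff y (k + 1) := by
    have := runMax_le (f := fun i => y (i - 1)) (k := k + 1) zero_le_two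
      fun i _ hi => hrest (i - 1) (by omega) (by omega)
    linarith [le_runMax (f := y) le_add_self (le_refl (k + 1)),
      show maxDiff y (k + 1) = _ - _ from rfl]
  have hafter : maxDiff y (k + 2) = 0 := by
    have hle : ∀ i ≤ k + 2, y i ≤ y (k + 1) := fun i hi => by
      rcases eq_or_ne i (k + 1) with rfl | hik
      · rfl
      · linarith [hrest i hi hik]
    rw [maxDiff, runMax_eq_of_le (i₀ := k + 1) le_add_self (by omega) (by linarith)
        fun i _ hi => hle i hi,
      runMax_eq_of_le (f := fun i => y (i - 1)) (i₀ := k + 2) (by omega) le_rfl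
        (show 0 ≤ y (k + 1) by linarith)
        fun i _ hi => hle (i - 1) (by omega)]
    exact sub_self _
  exact lt_M1Dist zero_le_one (by linarith) (by linarith)

lemma one_lt_M1Osc_of_isolated_peak {y : ℕ → ℝ} {k n : ℕ} (hkn : k + 2 ≤ n)
    (hpeak : 5 < y (k + 1)) (hrest : ∀ i ≤ n, i ≠ k + 1 → y i ≤ 2) {δ : ℝ} (hδ : 2 / n ≤ δ) :
    1 < M1Osc (fun t => maxDiff y ⌊(n : ℝ) * t⌋₊) δ :=
  (one_lt_M1Dist_maxDiff hpeak fun i hi => hrest i (hi.trans hkn)).trans_le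
    (M1Dist_le_M1Osc_comp_floor _ hkn hδ)

lemma tendsto_one_sub_exp_neg_div_self :
    Tendsto (fun x : ℝ => (1 - exp (-x)) / x) (𝓝[≠] 0) (𝓝 1) := by
  have h : HasDerivAt (fun x : ℝ => 1 - exp (-x)) 1 0 := by
    simpa using ((hasDerivAt_neg 0).exp).const_sub 1
  refine (hasDerivAt_iff_tendsto_slope.1 h).congr fun x => ?_
  simp [slope_def_field]

lemma tendsto_zero_of_tendsto_nat_mul {v : ℕ → ℝ} {L : ℝ}
    (h : Tendsto (fun n : ℕ => (n : ℝ) * v n) atTop (𝓝 L)) : Tendsto v atTop (𝓝 0) := by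
  have h0 := h.mul tendsto_one_div_atTop_nhds_zero_nat
  rw [mul_zero] at h0
  refine h0.congr' ?_
  filter_upwards [eventually_ne_atTop 0] with n hn
  field_simp

lemma tendsto_nat_mul_one_sub_exp_neg_iff {u : ℕ → ℝ} (hu : ∀ n, 0 < u n) {L : ℝ} :
    Tendsto (fun n : ℕ => (n : ℝ) * (1 - exp (-u n))) atTop (𝓝 L) ↔
      Tendsto (fun n : ℕ => (n : ℝ) * u n) atTop (𝓝 L) := by
  have hratio : Tendsto u atTop (𝓝 0) →
      Tendsto (fun n => (1 - exp (-u n)) / u n) atTop (𝓝 1) := fun hu0 =>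
    tendsto_one_sub_exp_neg_div_self.comp
      (tendsto_nhdsWithin_iff.2 ⟨hu0, .of_forall fun n => (hu n).ne'⟩)
  have hfactor : ∀ n : ℕ, (n : ℝ) * (1 - exp (-u n)) = n * u n * ((1 - exp (-u n)) / u n) :=
    fun n => by field_simp [(hu n).ne']
  constructor
  · intro h
    have hu0 : Tendsto u atTop (𝓝 0) := by
      have hexp : Tendsto (fun n => exp (-u n)) atTop (𝓝 1) := by
        simpa using (tendsto_zero_of_tendsto_nat_mul h).const_sub 1
      simpa using ((continuousAt_log one_ne_zero).tendsto.comp hexp).neg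
    simpa using (h.div (hratio hu0) one_ne_zero).congr fun n => by
      show n * (1 - exp (-u n)) / ((1 - exp (-u n)) / u n) = n * u n
      rw [hfactor, mul_div_cancel_right₀]
      exact (div_pos (by linarith [exp_lt_one_iff.2 (neg_lt_zero.2 (hu n))]) (hu n)).ne'
  · intro h
    simpa [← hfactor] using h.mul (hratio (tendsto_zero_of_tendsto_nat_mul h))

lemma tendsto_isolatedPeak_prob {u : ℕ → ℝ} (hu : ∀ n, 0 < u n)
    (h : Tendsto (fun n : ℕ => (n : ℝ) * u n) atTop (𝓝 1)) {s : ℝ} (hs : 0 < s) (r : ℝ) :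
    Tendsto (fun n : ℕ => ((n - 1 : ℕ) : ℝ) * ((1 - exp (-(s * u n))) * exp (-(r * u n)) ^ n))
      atTop (𝓝 (s * exp (-r))) := by
  have hq : Tendsto (fun n : ℕ => (n : ℝ) * (1 - exp (-(s * u n)))) atTop (𝓝 s) :=
    (tendsto_nat_mul_one_sub_exp_neg_iff fun n => mul_pos hs (hu n)).2 <| by
      simpa [mul_left_comm] using h.const_mul s
  have hq' : Tendsto (fun n : ℕ => ((n - 1 : ℕ) : ℝ) * (1 - exp (-(s * u n)))) atTop (𝓝 s) := by
    have hsub : Tendsto (fun n : ℕ => (n : ℝ) * (1 - exp (-(s * u n))) - (1 - exp (-(s * u n))))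
        atTop (𝓝 s) := by simpa using hq.sub (tendsto_zero_of_tendsto_nat_mul hq)
    refine hsub.congr' ?_
    filter_upwards [eventually_ge_atTop 1] with n hn
    rw [Nat.cast_sub hn]
    ring
  have hpow : Tendsto (fun n : ℕ => exp (-(r * u n)) ^ n) atTop (𝓝 (exp (-r))) := by
    have harg : Tendsto (fun n : ℕ => -(r * (n * u n))) atTop (𝓝 (-r)) := by
      simpa using (h.const_mul r).neg
    refine ((continuous_exp.tendsto _).comp harg).congr fun n => ?_
    simp only [Function.comp_apply, ← exp_nat_mul]
    ring_nf
  simpa only [mul_assoc] using hq'.mul hpow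

section IsolatedPeakSet

variable {Ω : Type*} {Z : ℕ → Ω → ℝ} {b c : ℝ} {n j : ℕ}

def isolatedPeakSet (Z : ℕ → Ω → ℝ) (b c : ℝ) (n j : ℕ) : Set Ω :=
  ⋂ i ∈ Finset.range (n + 1), Z i ⁻¹' (if i = j then Set.Ioi c else Set.Iic b)

lemma mem_isolatedPeakSet {ω : Ω} (hj : j ≤ n) :
    ω ∈ isolatedPeakSet Z b c n j ↔ c < Z j ω ∧ ∀ i ≤ n, i ≠ j → Z i ω ≤ b := by
  simp only [isolatedPeakSet, Set.mem_iInter, Finset.mem_range, Nat.lt_succ_iff]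
  refine ⟨fun h => ⟨by simpa using h j hj, fun i hi hij => by simpa [hij] using h i hi⟩,
    fun h i hi => ?_⟩
  split_ifs with hij
  · exact hij ▸ h.1
  · exact h.2 i hi hij

lemma pairwiseDisjoint_isolatedPeakSet (hbc : b ≤ c) :
    (Set.Iic n).PairwiseDisjoint (isolatedPeakSet Z b c n) := by
  intro j hj j' hj' hne
  refine Set.disjoint_left.2 fun ω hω hω' => ?_
  have hpeak := ((mem_isolatedPeakSet hj).1 hω).1
  have hlow := ((mem_isolatedPeakSet hj').1 hω').2 j hj hne
  linarith

variable [MeasurableSpace Ω] {μ : Measure Ω}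

lemma measurableSet_isolatedPeakSet (hZ : ∀ i, Measurable (Z i)) :
    MeasurableSet (isolatedPeakSet Z b c n j) :=
  Finset.measurableSet_biInter _ fun i _ => hZ i (by split_ifs <;> measurability)

lemma measure_isolatedPeakSet (hind : iIndepFun Z μ) {β γ : ENNReal}
    (hβ : ∀ i, μ (Z i ⁻¹' Set.Iic b) = β) (hγ : ∀ i, μ (Z i ⁻¹' Set.Ioi c) = γ) (hj : j ≤ n) :
    μ (isolatedPeakSet Z b c n j) = γ * β ^ n := by
  have hjmem : j ∈ Finset.range (n + 1) := Finset.mem_range.2 (Nat.lt_succ_of_le hj)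
  rw [isolatedPeakSet, hind.measure_inter_preimage_eq_mul _ fun i _ => by
      split_ifs <;> measurability, ← Finset.mul_prod_erase _ _ hjmem, if_pos rfl, hγ,
    Finset.prod_congr rfl fun i hi => by rw [if_neg (Finset.ne_of_mem_erase hi), hβ],
    Finset.prod_const, Finset.card_erase_of_mem hjmem, Finset.card_range, Nat.add_sub_cancel]

lemma measure_biUnion_isolatedPeakSet (hZ : ∀ i, Measurable (Z i)) (hind : iIndepFun Z μ)
    {β γ : ENNReal} (hβ : ∀ i, μ (Z i ⁻¹' Set.Iic b) = β) (hγ : ∀ i, μ (Z i ⁻¹' Set.Ioi c) = γ)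
    (hbc : b ≤ c) {s : Finset ℕ} (hs : ∀ j ∈ s, j ≤ n) :
    μ (⋃ j ∈ s, isolatedPeakSet Z b c n j) = s.card * (γ * β ^ n) := by
  rw [measure_biUnion_finset ((pairwiseDisjoint_isolatedPeakSet hbc).subset fun j hj => hs j hj)
      fun j _ => measurableSet_isolatedPeakSet hZ,
    Finset.sum_congr rfl fun j hj => measure_isolatedPeakSet hind hβ hγ (hs j hj),
    Finset.sum_const, nsmul_eq_mul]

end IsolatedPeakSet

lemma measure_preimage_Ioi_eq_ofReal_one_sub {Ω : Type*} [MeasurableSpace Ω] {μ : Measure Ω}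
    [IsProbabilityMeasure μ] {X : Ω → ℝ} (hX : Measurable X) {x F : ℝ} (hF : 0 ≤ F)
    (h : μ (X ⁻¹' Set.Iic x) = ENNReal.ofReal F) :
    μ (X ⁻¹' Set.Ioi x) = ENNReal.ofReal (1 - F) := by
  rw [← Set.compl_Iic, Set.preimage_compl, prob_compl_eq_one_sub (hX measurableSet_Iic), h,
    ENNReal.ofReal_sub _ hF, ENNReal.ofReal_one]

lemma toReal_measure_biUnion_isolatedPeakSet {Ω : Type*} [MeasurableSpace Ω] {μ : Measure Ω}
    [IsProbabilityMeasure μ] {Z : ℕ → Ω → ℝ} (hZ : ∀ i, Measurable (Z i))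
    (hind : iIndepFun Z μ)
    (hF : ∀ i {x : ℝ}, 0 < x → μ (Z i ⁻¹' Set.Iic x) = ENNReal.ofReal (exp (-(1 / x))))
    {b c : ℝ} (hb : 0 < b) (hbc : b ≤ c) (n : ℕ) :
    (μ (⋃ j ∈ Finset.Icc 1 (n - 1), isolatedPeakSet Z b c n j)).toReal =
      ((n - 1 : ℕ) : ℝ) * ((1 - exp (-(1 / c))) * exp (-(1 / b)) ^ n) := by
  have hc : 0 < c := hb.trans_le hbc
  rw [measure_biUnion_isolatedPeakSet hZ hind (fun i => hF i hb)
      (fun i => measure_preimage_Ioi_eq_ofReal_one_sub (hZ i) (exp_nonneg _) (hF i hc)) hbc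
      fun j hj => (Finset.mem_Icc.1 hj).2.trans (Nat.sub_le n 1),
    Nat.card_Icc, Nat.add_sub_cancel]
  simp only [ENNReal.toReal_mul, ENNReal.toReal_pow, ENNReal.toReal_natCast,
    ENNReal.toReal_ofReal (exp_nonneg _),
    ENNReal.toReal_ofReal (sub_nonneg.2 (exp_le_one_iff.2 (neg_nonpos.2 (one_div_pos.2 hc).le)))]

lemma biUnion_isolatedPeakSet_subset {Ω : Type*} (Z : ℕ → Ω → ℝ) {a : ℝ} (ha : 0 < a) {n : ℕ}
    {δ : ℝ} (hδ : 2 / n ≤ δ) :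
    ⋃ j ∈ Finset.Icc 1 (n - 1), isolatedPeakSet Z (2 * a) (5 * a) n j ⊆
      {ω | 1 < M1Osc (fun t => maxDiff (fun j => Z j ω / a) ⌊(n : ℝ) * t⌋₊) δ} := by
  intro ω hω
  simp only [Set.mem_iUnion, Finset.mem_Icc, exists_prop] at hω
  obtain ⟨j, hj, hωj⟩ := hω
  obtain ⟨k, rfl⟩ : ∃ k, j = k + 1 := ⟨j - 1, by omega⟩
  rw [mem_isolatedPeakSet (by omega)] at hωj
  exact one_lt_M1Osc_of_isolated_peak (k := k) (by omega) ((lt_div_iff₀ ha).2 hωj.1)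
    (fun i hi hik => (div_le_iff₀ ha).2 (hωj.2 i hi hik)) hδ

/-- Let `(Z_i)_{i≥0}` be i.i.d. unit Fréchet random variables
(`P(Z ≤ x) = exp(−1/x)` for `x > 0` and `= 0` for `x ≤ 0`) and let `(a_n)` be positive
reals with `n·P(Z_1 > a_n) → 1`. For `n ≥ 1` define `V_n : [0,1] → ℝ` by
`V_n(t) = ⋁_{j=1}^{⌊nt⌋} Z_j/a_n − ⋁_{j=1}^{⌊nt⌋} Z_{j−1}/a_n` (maximum over an empty
index set equal to `0`, realized by `Finset.fold max 0`). Then there exist `ε > 0` and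
`c > 0` such that for every `δ > 0`, `limsup_{n→∞} P( ω_δ(V_n) > ε ) ≥ c`; in particular
`lim_{δ↓0} limsup_{n→∞} P( ω_δ(V_n) > ε ) > 0`. -/
theorem exists_eps_limsup_prob_osc_pos {Ω : Type*} [MeasureSpace Ω]
    [IsProbabilityMeasure (ℙ : Measure Ω)]
    (Z : ℕ → Ω → ℝ) (hmeas : ∀ i, Measurable (Z i))
    (hindep : iIndepFun Z ℙ)
    (hcdf : ∀ i : ℕ, ∀ x : ℝ,
      ℙ {ω | Z i ω ≤ x} = if 0 < x then ENNReal.ofReal (Real.exp (-1 / x)) else 0)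
    (a : ℕ → ℝ) (ha : ∀ n, 0 < a n)
    (hna : Tendsto (fun n : ℕ => (n : ℝ) * (ℙ {ω | a n < Z 1 ω}).toReal) atTop (nhds 1)) :
    ∃ ε : ℝ, 0 < ε ∧ ∃ c : ℝ, 0 < c ∧
      ∀ δ : ℝ, 0 < δ →
        c ≤ Filter.limsup (fun n : ℕ =>
          (ℙ {ω | ε < M1Osc (fun t : ℝ =>
              ((Finset.Icc 1 ⌊(n : ℝ) * t⌋₊).fold max 0 (fun j => Z j ω / a n)) -
                ((Finset.Icc 1 ⌊(n : ℝ) * t⌋₊).fold max 0 (fun j => Z (j - 1) ω / a n))) δ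
            }).toReal) atTop := by
  refine ⟨1, one_pos, 1 / 5 * exp (-(1 / 2)), by positivity, fun δ hδ => ?_⟩
  have hF : ∀ i {x : ℝ}, 0 < x → ℙ (Z i ⁻¹' Set.Iic x) = ENNReal.ofReal (exp (-(1 / x))) :=
    fun i x hx => by rw [← neg_div]; exact (hcdf i x).trans (if_pos hx)
  have hu : ∀ n, 0 < 1 / a n := fun n => one_div_pos.2 (ha n)
  have hnu : Tendsto (fun n : ℕ => (n : ℝ) * (1 / a n)) atTop (𝓝 1) := by
    refine (tendsto_nat_mul_one_sub_exp_neg_iff hu).1 (hna.congr fun n => ?_)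
    rw [show {ω | a n < Z 1 ω} = Z 1 ⁻¹' Set.Ioi (a n) from rfl,
      measure_preimage_Ioi_eq_ofReal_one_sub (hmeas 1) (exp_nonneg _) (hF 1 (ha n)),
      ENNReal.toReal_ofReal (sub_nonneg.2 (exp_le_one_iff.2 (by linarith [hu n])))]
  set E : ℕ → Set Ω := fun n =>
    ⋃ j ∈ Finset.Icc 1 (n - 1), isolatedPeakSet Z (2 * a n) (5 * a n) n j
  have hlim : Tendsto (fun n => (ℙ (E n)).toReal) atTop (𝓝 (1 / 5 * exp (-(1 / 2)))) := by
    refine (tendsto_isolatedPeak_prob hu hnu (by norm_num) (1 / 2)).congr fun n => ?_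
    rw [toReal_measure_biUnion_isolatedPeakSet hmeas hindep hF (by linarith [ha n])
      (by linarith [ha n])]
    ring_nf
  have hsub : ∀ᶠ n : ℕ in atTop, E n ⊆
      {ω | 1 < M1Osc (fun t => maxDiff (fun j => Z j ω / a n) ⌊(n : ℝ) * t⌋₊) δ} := by
    filter_upwards [(tendsto_const_div_atTop_nhds_zero_nat 2).eventually (eventually_le_nhds hδ)]
      with n hn using biUnion_isolatedPeakSet_subset Z (ha n) hn
  calc 1 / 5 * exp (-(1 / 2)) = limsup (fun n => (ℙ (E n)).toReal) atTop :=
        hlim.limsup_eq.symm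
    _ ≤ _ := limsup_le_limsup
        (hsub.mono fun n hn => ENNReal.toReal_mono (measure_ne_top _ _) (measure_mono hn))
        hlim.isCoboundedUnder_le (isBoundedUnder_of ⟨1, fun n => measureReal_le_one⟩)
end
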